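/- Let n ≥ 2 and d ≥ 0. The number of set partitions of {1, 2, …, d} into at most n nonempty blocks equals the number of words of length d over the set {e} ∪ C_n in S_n (the identity together with the permutations with descent set {1}) that reduce to the identity permutation. -/

import Mathlib

/-- The cycle `σ_k = (1 k k-1 ⋯ 3 2)` of `S_n` (1-based: `σ_k(1) = k`,
`σ_k(i) = i-1` for `2 ≤ i ≤ k`, `σ_k(i) = i` for `i > k`), written 0-based on `Fin n`:
it sends `0 ↦ k-1`, `i ↦ i-1` for `1 ≤ i ≤ k-1`, and fixes `i ≥ k`. -/
def sigmaPerm (n k : ℕ) (hk : 2 ≤ k) (hkn : k ≤ n) : Equiv.Perm (Fin n) where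
  toFun i := ⟨if (i : ℕ) = 0 then k - 1 else if (i : ℕ) ≤ k - 1 then (i : ℕ) - 1 else (i : ℕ),
    by have := i.isLt; split_ifs <;> omega⟩
  invFun i := ⟨if (i : ℕ) = k - 1 then 0 else if (i : ℕ) < k - 1 then (i : ℕ) + 1 else (i : ℕ),
    by have := i.isLt; split_ifs <;> omega⟩
  left_inv := by
    intro i
    have := i.isLt
    apply Fin.ext
    simp only [Fin.val_mk]
    split_ifs <;> first
      | omega
      | (simp_all only [Fin.val_mk] <;> omega)
  right_inv := by
    intro i
    have := i.isLt
    apply Fin.ext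
    simp only [Fin.val_mk]
    split_ifs <;> first
      | omega
      | (simp_all only [Fin.val_mk] <;> omega)

/-- The set `C_n = {σ_2, …, σ_n}` of the permutations of `{1, …, n}`
whose descent set is `{1}`. -/
def Cn (n : ℕ) : Finset (Equiv.Perm (Fin n)) :=
  (Finset.Icc 2 n).attach.image fun k : {x // x ∈ Finset.Icc 2 n} =>
    sigmaPerm n k.1 (Finset.mem_Icc.mp k.2).1 (Finset.mem_Icc.mp k.2).2


/-- `A` is a set partition of `{1, …, d}`: a (finite) family of pairwise disjoint
nonempty subsets (blocks) whose union is `{1, …, d}`. -/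
def IsSetPartition (d : ℕ) (A : Finset (Finset ℕ)) : Prop :=
  (∀ b ∈ A, b.Nonempty) ∧ (A : Set (Finset ℕ)).PairwiseDisjoint id ∧
    A.sup id = Finset.Icc 1 d

/-!
Let `γ_v` be the inverse of the cycle `Fin.cycleRange v = (0 1 ⋯ v)`. The generators
`{e} ∪ C_n` are exactly the `γ_v`, one for each `v`, namely the one with `γ_v 0 = v`. Read a
permutation `s` as a deck of cards, position `p` holding card `s p`: then `s * γ_v` is the deck
`s` with the card at position `v` moved to the top. Recording the card moved at each step instead
of its position turns words of length `d` bijectively into card sequences `c : Fin d → Fin n`,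
and a word reduces to the identity iff the move-to-front shuffle driven by `c` ends with the
sorted deck.

After the shuffle the cards that were moved lie on top, the most recently moved first, followed by
the others in increasing order. Hence the deck ends sorted iff `c` labels each element of the
partition `{t + 1 | c t = j}` of `{1, …, d}` by the number of blocks whose maximum exceeds the
maximum of its own block. Every partition into at most `n` blocks has exactly one such labelling.
-/

open Finset Equiv

namespace Fin

theorem coe_cycleRange {n : ℕ} (v p : Fin n) :
    (cycleRange v p : ℕ) = if p = v then 0 else if p < v then (p : ℕ) + 1 else p := by
  rcases lt_trichotomy p v with h | rfl | h
  · simp [coe_cycleRange_of_lt h, h, h.ne]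
  · simp [coe_cycleRange_of_le le_rfl]
  · simp [cycleRange_of_gt h, h.ne', h.not_gt]

theorem coe_cycleRange_pos {n : ℕ} {v p : Fin n} (hp : p ≠ v) : 0 < (cycleRange v p : ℕ) := by
  rw [coe_cycleRange, if_neg hp]
  rw [Ne, Fin.ext_iff] at hp
  simp only [Fin.lt_def]
  split_ifs <;> omega

theorem cycleRange_lt_cycleRange_iff {n : ℕ} {v p q : Fin n} (hp : p ≠ v) (hq : q ≠ v) :
    cycleRange v p < cycleRange v q ↔ p < q := by
  rw [Fin.lt_def, coe_cycleRange, coe_cycleRange, if_neg hp, if_neg hq]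
  rw [Ne, Fin.ext_iff] at hp hq
  simp only [Fin.lt_def]
  split_ifs <;> omega

end Fin

theorem sigmaPerm_eq_cycleRange_inv (n k : ℕ) (hk : 2 ≤ k) (hkn : k ≤ n) :
    sigmaPerm n k hk hkn = (Fin.cycleRange ⟨k - 1, by omega⟩)⁻¹ := by
  refine Equiv.ext fun i => ?_
  rw [Perm.inv_def, eq_comm, Equiv.symm_apply_eq, Fin.ext_iff, Fin.coe_cycleRange]
  simp only [sigmaPerm, coe_fn_mk, Fin.ext_iff, Fin.lt_def]
  split_ifs <;> omega

theorem mem_insert_one_Cn_iff {n : ℕ} [NeZero n] {x : Perm (Fin n)} :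
    x ∈ insert 1 (Cn n) ↔ ∃ v : Fin n, (Fin.cycleRange v)⁻¹ = x := by
  simp only [mem_insert, Cn, mem_image, mem_attach, true_and, Subtype.exists, mem_Icc]
  constructor
  · rintro (rfl | ⟨k, ⟨hk, hkn⟩, rfl⟩)
    · exact ⟨0, by simp [Fin.cycleRange_zero]⟩
    · exact ⟨_, (sigmaPerm_eq_cycleRange_inv n k hk hkn).symm⟩
  · rintro ⟨v, rfl⟩
    by_cases hv : v = 0
    · simp [hv, Fin.cycleRange_zero]
    · have hv' : (v : ℕ) ≠ 0 := fun h => hv (Fin.ext h)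
      refine Or.inr ⟨v + 1, ⟨by omega, by omega⟩, ?_⟩
      rw [sigmaPerm_eq_cycleRange_inv]
      rfl

def cycleRangeInvEquiv (n : ℕ) [NeZero n] :
    Fin n ≃ {x // x ∈ insert (1 : Perm (Fin n)) (Cn n)} where
  toFun v := ⟨(Fin.cycleRange v)⁻¹, mem_insert_one_Cn_iff.mpr ⟨v, rfl⟩⟩
  invFun x := x.1 0
  left_inv v := Fin.cycleRange_symm_zero v
  right_inv := by
    rintro ⟨x, hx⟩
    obtain ⟨v, rfl⟩ := mem_insert_one_Cn_iff.mp hx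
    simp [Fin.cycleRange_symm_zero]

section RelativeProd

variable {G X : Type*} [Group G] [MulAction G X] (e : X → G)

/-- When `e x • x₀ = x` for all `x`, the prefix product of length `t + 1` sends `x₀` to `c t`. -/
def relativeProd : {d : ℕ} → (Fin d → X) → G
  | 0, _ => 1
  | _ + 1, c => relativeProd (Fin.init c) * e ((relativeProd (Fin.init c))⁻¹ • c (Fin.last _))

theorem relativeProd_snoc {d : ℕ} (c : Fin d → X) (a : X) :
    relativeProd e (Fin.snoc c a : Fin (d + 1) → X) =
      relativeProd e c * e ((relativeProd e c)⁻¹ • a) := by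
  simp [relativeProd]

theorem exists_equiv_prod_ofFn_eq_relativeProd (d : ℕ) :
    ∃ Φ : (Fin d → X) ≃ (Fin d → X),
      ∀ v, (List.ofFn (e ∘ v)).prod = relativeProd e (Φ v) := by
  induction d with
  | zero => exact ⟨Equiv.refl _, fun v => rfl⟩
  | succ d ih =>
    obtain ⟨Φ, hΦ⟩ := ih
    let P : (Fin d → X) → G := fun v => (List.ofFn (e ∘ v)).prod
    refine ⟨{ toFun := fun v => Fin.snoc (Φ (Fin.init v)) (P (Fin.init v) • v (Fin.last d))
              invFun := fun c => Fin.snoc (Φ.symm (Fin.init c))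
                ((P (Φ.symm (Fin.init c)))⁻¹ • c (Fin.last d))
              left_inv := fun v => by simp [Fin.snoc_init_self]
              right_inv := fun c => by simp [Fin.snoc_init_self] }, fun v => ?_⟩
    simp only [coe_fn_mk, relativeProd_snoc, ← hΦ, P, inv_smul_smul]
    rw [List.ofFn_succ', List.prod_concat]
    rfl

end RelativeProd

section FiberPartition

variable {β : Type*} [DecidableEq β] {d : ℕ}

def fiberBlock (c : Fin d → β) (j : β) : Finset ℕ :=
  (univ.filter (c · = j)).image fun t : Fin d => (t : ℕ) + 1

def fiberPartition (c : Fin d → β) : Finset (Finset ℕ) :=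
  (univ.image c).image (fiberBlock c)

theorem mem_fiberBlock {c : Fin d → β} {j : β} {m : ℕ} :
    m ∈ fiberBlock c j ↔ ∃ t, c t = j ∧ (t : ℕ) + 1 = m := by
  simp [fiberBlock]

theorem mem_fiberBlock_self (c : Fin d → β) (t : Fin d) : (t : ℕ) + 1 ∈ fiberBlock c (c t) :=
  mem_fiberBlock.mpr ⟨t, rfl, rfl⟩

theorem fiberBlock_eq_empty_iff {c : Fin d → β} {j : β} :
    fiberBlock c j = ∅ ↔ ∀ t, c t ≠ j := by
  simp [fiberBlock, eq_empty_iff_forall_notMem]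

theorem fiberBlock_subset_Icc (c : Fin d → β) (j : β) : fiberBlock c j ⊆ Icc 1 d := by
  intro m hm
  obtain ⟨t, -, rfl⟩ := mem_fiberBlock.mp hm
  simp [Nat.succ_le_of_lt t.isLt]

theorem fiberBlock_snoc (c : Fin d → β) (a j : β) :
    fiberBlock (Fin.snoc c a : Fin (d + 1) → β) j =
      if a = j then insert (d + 1) (fiberBlock c j) else fiberBlock c j := by
  ext m
  simp only [mem_fiberBlock, Fin.exists_fin_succ', Fin.snoc_castSucc, Fin.snoc_last,
    Fin.val_castSucc, Fin.val_last]
  split_ifs with h <;> simp [h, eq_comm, mem_fiberBlock, or_comm]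

theorem mem_fiberPartition {c : Fin d → β} {B : Finset ℕ} :
    B ∈ fiberPartition c ↔ ∃ t, fiberBlock c (c t) = B := by
  simp [fiberPartition]

theorem isSetPartition_fiberPartition (c : Fin d → β) : IsSetPartition d (fiberPartition c) := by
  simp only [IsSetPartition, mem_fiberPartition, forall_exists_index, forall_apply_eq_imp_iff]
  refine ⟨fun t => ⟨_, mem_fiberBlock_self c t⟩, ?_, ?_⟩
  · intro B hB B' hB' hne
    obtain ⟨t, rfl⟩ := mem_fiberPartition.mp hB
    obtain ⟨s, rfl⟩ := mem_fiberPartition.mp hB'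
    refine disjoint_left.mpr fun m hm hm' => hne ?_
    obtain ⟨t', ht', rfl⟩ := mem_fiberBlock.mp hm
    obtain ⟨s', hs', hts⟩ := mem_fiberBlock.mp hm'
    rw [← ht', ← hs', Fin.ext (by omega : (s' : ℕ) = t')]
  · refine le_antisymm (Finset.sup_le fun B hB => ?_) fun m hm => ?_
    · obtain ⟨t, rfl⟩ := mem_fiberPartition.mp hB
      exact fiberBlock_subset_Icc c _
    · obtain ⟨h1, hd⟩ := mem_Icc.mp hm
      have := mem_fiberBlock_self c ⟨m - 1, by omega⟩
      exact mem_sup.mpr ⟨_, mem_fiberPartition.mpr ⟨_, rfl⟩,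
        by simpa [Nat.sub_add_cancel h1] using this⟩

theorem card_fiberPartition_le [Fintype β] (c : Fin d → β) :
    #(fiberPartition c) ≤ Fintype.card β :=
  card_image_le.trans (card_le_univ _)

end FiberPartition

section MoveToFront

variable {n d : ℕ}

/-- The sorting key of card `j` in the deck shuffled by `c`: minus the time `t + 1` of its last
move if it was moved, and `j` itself otherwise. -/
def recencyKey (c : Fin d → Fin n) (j : Fin n) : ℤ :=
  if fiberBlock c j = ∅ then j else -((fiberBlock c j).sup id : ℕ)

theorem neg_le_recencyKey (c : Fin d → Fin n) (j : Fin n) : -(d : ℤ) ≤ recencyKey c j := by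
  unfold recencyKey
  split_ifs
  · have := j.isLt; omega
  · have : (fiberBlock c j).sup id ≤ d :=
      Finset.sup_le fun m hm => (mem_Icc.mp (fiberBlock_subset_Icc c j hm)).2
    omega

theorem recencyKey_snoc (c : Fin d → Fin n) (a j : Fin n) :
    recencyKey (Fin.snoc c a : Fin (d + 1) → Fin n) j =
      if j = a then -((d : ℤ) + 1) else recencyKey c j := by
  unfold recencyKey
  rw [fiberBlock_snoc]
  by_cases hj : j = a
  · subst hj
    have : (fiberBlock c j).sup id ≤ d :=
      Finset.sup_le fun m hm => (mem_Icc.mp (fiberBlock_subset_Icc c j hm)).2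
    simp [Finset.sup_insert]
    omega
  · simp [hj, Ne.symm hj]

theorem recencyKey_apply_self (c : Fin d → Fin n) (t : Fin d) :
    recencyKey c (c t) = -((fiberBlock c (c t)).sup id : ℕ) :=
  if_neg (ne_empty_of_mem (mem_fiberBlock_self c t))

theorem recencyKey_apply_self_neg (c : Fin d → Fin n) (t : Fin d) : recencyKey c (c t) < 0 := by
  have : (t : ℕ) + 1 ≤ (fiberBlock c (c t)).sup id := le_sup (f := id) (mem_fiberBlock_self c t)
  rw [recencyKey_apply_self]
  omega

theorem recencyKey_of_forall_ne {c : Fin d → Fin n} {j : Fin n} (h : ∀ t, c t ≠ j) :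
    recencyKey c j = j :=
  if_pos (fiberBlock_eq_empty_iff.mpr h)

def moveToFront (c : Fin d → Fin n) : Perm (Fin n) :=
  relativeProd (fun v => (Fin.cycleRange v)⁻¹) c

theorem moveToFront_inv_lt_iff (c : Fin d → Fin n) (i j : Fin n) :
    (moveToFront c)⁻¹ i < (moveToFront c)⁻¹ j ↔ recencyKey c i < recencyKey c j := by
  induction d with
  | zero => simp [moveToFront, relativeProd, recencyKey, fiberBlock]
  | succ d ih =>
    obtain ⟨c, a, rfl⟩ : ∃ c' a, c = Fin.snoc c' a := ⟨_, _, (Fin.snoc_init_self c).symm⟩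
    set s := moveToFront c
    have hs : ∀ x, (moveToFront (Fin.snoc c a : Fin (d + 1) → Fin n))⁻¹ x =
        Fin.cycleRange (s⁻¹ a) (s⁻¹ x) := fun x => by
      simp [moveToFront, relativeProd_snoc, s, Perm.smul_def]
    have hne : ∀ {x}, x ≠ a → s⁻¹ x ≠ s⁻¹ a := fun h => (s⁻¹).injective.ne h
    have h0 : (Fin.cycleRange (s⁻¹ a) (s⁻¹ a) : ℕ) = 0 := by simp [Fin.coe_cycleRange]
    have hi := neg_le_recencyKey c i
    have hj := neg_le_recencyKey c j
    rw [hs, hs, recencyKey_snoc, recencyKey_snoc]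
    by_cases hia : i = a <;> by_cases hja : j = a
    · simp [hia, hja]
    · subst hia
      simp only [if_pos, if_neg hja]
      exact iff_of_true (Fin.lt_def.mpr (h0 ▸ Fin.coe_cycleRange_pos (hne hja))) (by omega)
    · subst hja
      simp only [if_pos, if_neg hia]
      exact iff_of_false (fun h => by rw [Fin.lt_def, h0] at h; omega) (by omega)
    · simp only [if_neg hia, if_neg hja]
      rw [Fin.cycleRange_lt_cycleRange_iff (hne hia) (hne hja)]
      exact ih c

theorem moveToFront_eq_one_iff (c : Fin d → Fin n) :
    moveToFront c = 1 ↔ StrictMono (recencyKey c) := by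
  constructor
  · intro h i j hij
    have := moveToFront_inv_lt_iff c i j
    rw [h, inv_one, Perm.one_apply, Perm.one_apply] at this
    exact this.mp hij
  · intro h
    have hmono : StrictMono ⇑(moveToFront c)⁻¹ := fun i j hij =>
      (moveToFront_inv_lt_iff c i j).mpr (h hij)
    have hid : ⇑(moveToFront c)⁻¹ = id :=
      (hmono.range_inj strictMono_id).mp <| by
        rw [Set.range_id]
        exact (Equiv.surjective _).range_eq
    exact inv_eq_one.mp (Equiv.ext (congrFun hid))

theorem card_prod_eq_one_eq_card_moveToFront_eq_one (n d : ℕ) [NeZero n] :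
    Nat.card {w : Fin d → {x // x ∈ insert (1 : Perm (Fin n)) (Cn n)} //
        (List.ofFn fun i => (w i : Perm (Fin n))).prod = 1} =
      Nat.card {c : Fin d → Fin n // moveToFront c = 1} := by
  obtain ⟨Φ, hΦ⟩ :=
    exists_equiv_prod_ofFn_eq_relativeProd (fun v : Fin n => (Fin.cycleRange v)⁻¹) d
  refine Nat.card_congr <| Equiv.subtypeEquiv
    ((Equiv.arrowCongr (Equiv.refl _) (cycleRangeInvEquiv n).symm).trans Φ) fun w => ?_
  have hw : (fun v : Fin n => (Fin.cycleRange v)⁻¹) ∘ ((cycleRangeInvEquiv n).symm ∘ w) =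
      fun i => (w i : Perm (Fin n)) :=
    funext fun i => congrArg Subtype.val ((cycleRangeInvEquiv n).apply_symm_apply (w i))
  rw [Equiv.trans_apply, moveToFront, ← hΦ]
  exact iff_of_eq (congrArg (fun w' => (List.ofFn w').prod = 1) hw.symm)

end MoveToFront

section RankAbove

variable {ι α : Type*} [LinearOrder α] {s : Finset ι} {f : ι → α} {a b : ι}

def rankAbove (s : Finset ι) (f : ι → α) (a : ι) : ℕ := #{x ∈ s | f a < f x}

theorem rankAbove_lt_rankAbove (hb : b ∈ s) (h : f a < f b) :
    rankAbove s f b < rankAbove s f a := by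
  refine card_lt_card ((ssubset_iff_of_subset fun x hx => ?_).mpr ⟨b, ?_, by simp⟩)
  · simp only [mem_filter] at hx ⊢
    exact ⟨hx.1, h.trans hx.2⟩
  · simp [hb, h]

theorem rankAbove_lt_card (ha : a ∈ s) : rankAbove s f a < #s :=
  card_lt_card (filter_ssubset.mpr ⟨a, ha, lt_irrefl _⟩)

theorem rankAbove_injOn (hf : Set.InjOn f s) : Set.InjOn (rankAbove s f) s := by
  intro a ha b hb h
  rcases lt_trichotomy (f a) (f b) with hab | hab | hab
  · exact absurd h (rankAbove_lt_rankAbove hb hab).ne'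
  · exact hf ha hb hab
  · exact absurd h (rankAbove_lt_rankAbove ha hab).ne

theorem image_rankAbove (hf : Set.InjOn f s) : s.image (rankAbove s f) = range #s :=
  eq_of_subset_of_card_le (fun _ hx => by
      obtain ⟨a, ha, rfl⟩ := mem_image.mp hx
      exact mem_range.mpr (rankAbove_lt_card ha))
    (by rw [card_range, card_image_of_injOn (rankAbove_injOn hf)])

end RankAbove

namespace IsSetPartition

variable {d m : ℕ} {A : Finset (Finset ℕ)} {B B' : Finset ℕ}

theorem subset_Icc (hA : IsSetPartition d A) (hB : B ∈ A) : B ⊆ Icc 1 d :=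
  hA.2.2 ▸ le_sup (f := id) hB

theorem exists_mem (hA : IsSetPartition d A) (hm : m ∈ Icc 1 d) : ∃ B ∈ A, m ∈ B :=
  mem_sup.mp (hA.2.2 ▸ hm)

theorem exists_succ_mem (hA : IsSetPartition d A) (t : Fin d) : ∃ B ∈ A, (t : ℕ) + 1 ∈ B :=
  hA.exists_mem (mem_Icc.mpr ⟨by omega, t.isLt⟩)

theorem exists_succ_eq (hA : IsSetPartition d A) (hB : B ∈ A) (hm : m ∈ B) :
    ∃ t : Fin d, (t : ℕ) + 1 = m := by
  obtain ⟨h1, hd⟩ := mem_Icc.mp (hA.subset_Icc hB hm)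
  exact ⟨⟨m - 1, by omega⟩, by simp only; omega⟩

theorem eq_of_mem_of_mem (hA : IsSetPartition d A) (hB : B ∈ A) (hB' : B' ∈ A) (hm : m ∈ B)
    (hm' : m ∈ B') : B = B' :=
  hA.2.1.elim_finset hB hB' m hm hm'

theorem sup_mem (hA : IsSetPartition d A) (hB : B ∈ A) : B.sup id ∈ B := by
  obtain ⟨m, hm, h⟩ := exists_mem_eq_sup B (hA.1 B hB) id
  exact h ▸ hm

theorem injOn_sup (hA : IsSetPartition d A) : Set.InjOn (fun B : Finset ℕ => B.sup id) A :=
  fun B hB B' hB' (h : B.sup id = B'.sup id) =>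
    hA.eq_of_mem_of_mem hB hB' (hA.sup_mem hB) (h ▸ hA.sup_mem hB')

end IsSetPartition

def rankLabel (A : Finset (Finset ℕ)) (m : ℕ) : ℕ :=
  #{B ∈ A | ∃ B' ∈ A, m ∈ B' ∧ B'.sup id < B.sup id}

theorem rankLabel_eq {d m : ℕ} {A : Finset (Finset ℕ)} {B : Finset ℕ}
    (hA : IsSetPartition d A) (hB : B ∈ A) (hm : m ∈ B) : rankLabel A m = rankAbove A (fun B => B.sup id) B := by
  refine congrArg card (filter_congr fun B'' _ => ⟨?_, fun h => ⟨B, hB, hm, h⟩⟩)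
  rintro ⟨B', hB', hm', h⟩
  rwa [hA.eq_of_mem_of_mem hB hB' hm hm']

section Labelling

variable {n d : ℕ} {c : Fin d → Fin n}

theorem rankLabel_fiberPartition (h : StrictMono (recencyKey c)) (t : Fin d) :
    rankLabel (fiberPartition c) ((t : ℕ) + 1) = c t := by
  have hinj : Set.InjOn (fiberBlock c) (univ.image c) := by
    simp only [coe_image, coe_univ, Set.image_univ, Set.InjOn, Set.mem_range]
    rintro _ ⟨s, rfl⟩ _ ⟨s', rfl⟩ hss'
    obtain ⟨u, hu, hus⟩ := mem_fiberBlock.mp (hss' ▸ mem_fiberBlock_self c s)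
    rwa [Fin.ext (by omega : (u : ℕ) = s)] at hu
  have hfilter : {j ∈ univ.image c | (fiberBlock c (c t)).sup id < (fiberBlock c j).sup id} =
      ({j | recencyKey c j < recencyKey c (c t)} : Finset (Fin n)) := by
    ext j
    have hneg := recencyKey_apply_self_neg c t
    simp only [mem_filter, mem_image, mem_univ, true_and]
    by_cases hj : ∃ s, c s = j
    · obtain ⟨s, rfl⟩ := hj
      simp only [recencyKey_apply_self, exists_apply_eq_apply, true_and]
      omega
    · rw [recencyKey_of_forall_ne (not_exists.mp hj)]
      simp only [hj, false_and, false_iff, not_lt]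
      omega
  calc rankLabel (fiberPartition c) ((t : ℕ) + 1)
      = rankAbove (fiberPartition c) (fun B => B.sup id) (fiberBlock c (c t)) :=
        rankLabel_eq (isSetPartition_fiberPartition c) (mem_fiberPartition.mpr ⟨t, rfl⟩)
          (mem_fiberBlock_self c t)
    _ = #{j | recencyKey c j < recencyKey c (c t)} := by
        rw [rankAbove, fiberPartition, filter_image,
          card_image_of_injOn (hinj.mono (coe_subset.mpr (filter_subset _ _))), hfilter]
    _ = c t := by simp_rw [h.lt_iff_lt, filter_gt_eq_Iio, Fin.card_Iio]

section RankLabeling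

variable {A : Finset (Finset ℕ)} (hA : IsSetPartition d A)
  (hc : ∀ t : Fin d, (c t : ℕ) = rankLabel A ((t : ℕ) + 1))
include hA

theorem rankLabel_lt_card (t : Fin d) : rankLabel A ((t : ℕ) + 1) < #A := by
  obtain ⟨B, hB, ht⟩ := hA.exists_succ_mem t
  exact rankLabel_eq hA hB ht ▸ rankAbove_lt_card hB

include hc

theorem val_eq_rankAbove {B : Finset ℕ} (hB : B ∈ A) {t : Fin d} (ht : (t : ℕ) + 1 ∈ B) :
    (c t : ℕ) = rankAbove A (fun B => B.sup id) B :=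
  (hc t).trans (rankLabel_eq hA hB ht)

theorem fiberBlock_eq_of_rankLabel {B : Finset ℕ} (hB : B ∈ A) {t : Fin d}
    (ht : (t : ℕ) + 1 ∈ B) : fiberBlock c (c t) = B := by
  ext m
  rw [mem_fiberBlock]
  constructor
  · rintro ⟨s, hs, rfl⟩
    obtain ⟨B', hB', hsB'⟩ := hA.exists_succ_mem s
    have : B' = B := rankAbove_injOn hA.injOn_sup hB' hB <| by
      rw [← val_eq_rankAbove hA hc hB' hsB', ← val_eq_rankAbove hA hc hB ht, hs]
    exact this ▸ hsB'
  · intro hm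
    obtain ⟨s, rfl⟩ := hA.exists_succ_eq hB hm
    refine ⟨s, Fin.ext ?_, rfl⟩
    rw [val_eq_rankAbove hA hc hB hm, val_eq_rankAbove hA hc hB ht]

theorem fiberPartition_eq_of_rankLabel : fiberPartition c = A := by
  ext B
  rw [mem_fiberPartition]
  constructor
  · rintro ⟨t, rfl⟩
    obtain ⟨B, hB, ht⟩ := hA.exists_succ_mem t
    rwa [fiberBlock_eq_of_rankLabel hA hc hB ht]
  · intro hB
    obtain ⟨m, hm⟩ := hA.1 B hB
    obtain ⟨t, rfl⟩ := hA.exists_succ_eq hB hm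
    exact ⟨t, fiberBlock_eq_of_rankLabel hA hc hB hm⟩

theorem recencyKey_eq_of_rankLabel {B : Finset ℕ} (hB : B ∈ A) {t : Fin d}
    (ht : (t : ℕ) + 1 ∈ B) : recencyKey c (c t) = -(B.sup id : ℕ) := by
  rw [recencyKey_apply_self, fiberBlock_eq_of_rankLabel hA hc hB ht]

theorem exists_apply_eq_of_lt {j : Fin n} {t' : Fin d} (h : j < c t') : ∃ t, c t = j := by
  obtain ⟨B', hB', ht'⟩ := hA.exists_succ_mem t'
  have : (j : ℕ) ∈ A.image (rankAbove A fun B => B.sup id) := by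
    rw [image_rankAbove hA.injOn_sup, mem_range]
    exact (Fin.lt_def.mp h).trans (val_eq_rankAbove hA hc hB' ht' ▸ rankAbove_lt_card hB')
  obtain ⟨B, hB, hBj⟩ := mem_image.mp this
  obtain ⟨m, hm⟩ := hA.1 B hB
  obtain ⟨t, rfl⟩ := hA.exists_succ_eq hB hm
  exact ⟨t, Fin.ext ((val_eq_rankAbove hA hc hB hm).trans hBj)⟩

theorem strictMono_recencyKey_of_rankLabel : StrictMono (recencyKey c) := by
  intro j j' hjj'
  by_cases hj' : ∃ t', c t' = j'
  · obtain ⟨t', rfl⟩ := hj'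
    obtain ⟨t, rfl⟩ := exists_apply_eq_of_lt hA hc hjj'
    obtain ⟨B, hB, ht⟩ := hA.exists_succ_mem t
    obtain ⟨B', hB', ht'⟩ := hA.exists_succ_mem t'
    rw [recencyKey_eq_of_rankLabel hA hc hB ht, recencyKey_eq_of_rankLabel hA hc hB' ht',
      neg_lt_neg_iff, Nat.cast_lt]
    rw [Fin.lt_def, val_eq_rankAbove hA hc hB ht, val_eq_rankAbove hA hc hB' ht'] at hjj'
    refine lt_of_le_of_ne (not_lt.mp fun h => ?_) fun h => ?_
    · exact (rankAbove_lt_rankAbove hB' h).not_gt hjj'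
    · exact hjj'.ne (congrArg _ (hA.injOn_sup hB' hB h).symm)
  · rw [recencyKey_of_forall_ne (not_exists.mp hj')]
    by_cases hj : ∃ t, c t = j
    · obtain ⟨t, rfl⟩ := hj
      exact (recencyKey_apply_self_neg c t).trans_le (by positivity)
    · rw [recencyKey_of_forall_ne (not_exists.mp hj)]
      exact_mod_cast hjj'

end RankLabeling

end Labelling

def moveToFrontEqOneEquivSetPartition (n d : ℕ) :
    {c : Fin d → Fin n // moveToFront c = 1} ≃
      {A : Finset (Finset ℕ) // IsSetPartition d A ∧ A.card ≤ n} where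
  toFun c := ⟨fiberPartition c.1, isSetPartition_fiberPartition c.1,
    (card_fiberPartition_le c.1).trans_eq (Fintype.card_fin n)⟩
  invFun A := ⟨fun t =>
      ⟨rankLabel A.1 ((t : ℕ) + 1), (rankLabel_lt_card A.2.1 t).trans_le A.2.2⟩,
    (moveToFront_eq_one_iff _).mpr (strictMono_recencyKey_of_rankLabel A.2.1 fun _ => rfl)⟩
  left_inv c := Subtype.ext <| funext fun t =>
    Fin.ext (rankLabel_fiberPartition ((moveToFront_eq_one_iff _).mp c.2) t)
  right_inv A := Subtype.ext (fiberPartition_eq_of_rankLabel A.2.1 fun _ => rfl)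

/-- **Set partitions of `{1, …, d}` with at most `n` parts count words in a Cayley
graph of `S_n`.** For `n ≥ 2` and `d ≥ 0`, the number of set partitions of `{1, …, d}`
into at most `n` nonempty blocks equals the number of words of length `d` over
`{e} ∪ C_n` which reduce to the identity permutation. -/
theorem setPartition_count_eq_wordCount (n : ℕ) (hn : 2 ≤ n) (d : ℕ) :
    Nat.card {A : Finset (Finset ℕ) // IsSetPartition d A ∧ A.card ≤ n} =
      Nat.card {w : Fin d → {x // x ∈ insert (1 : Equiv.Perm (Fin n)) (Cn n)} //
        (List.ofFn fun i => ((w i : Equiv.Perm (Fin n)))).prod = 1} := by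
  have : NeZero n := ⟨by omega⟩
  rw [card_prod_eq_one_eq_card_moveToFront_eq_one,
    Nat.card_congr (moveToFrontEqOneEquivSetPartition n d)]
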